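/- Let x̄ ∈ E, r_max > 0, ψ ∈ (0, r_max), κ' ∈ (0, 1), ℓ > 0 and μ_max > 0, and let (T_μ)_{μ ∈ (0, μ_max]} be a family of maps E → E such that: (a) ‖T_μ(z₁) − T_μ(z₂)‖ ≤ κ'·‖z₁ − z₂‖ for all μ ∈ (0, μ_max] and all z₁, z₂ ∈ B(x̄, r_max); (b) ‖T_{μ₁}(x) − T_{μ₂}(x)‖ ≤ ℓ·|μ₁ − μ₂| for all μ₁, μ₂ ∈ (0, μ_max] and all x ∈ B(x̄, r_max); and (c) for every μ ∈ (0, μ_max], T_μ has a fixed point z_μ ∈ B(x̄, r_max) satisfying r_max − ‖z_μ − x̄‖ > ψ. Let ε ∈ [0, (1 − κ')·ψ), let μ₁ ∈ (0, μ_max], let ρ ∈ (0, 1) satisfy ℓ·(1 − ρ)·μ₁ ≤ (1 − κ')·ψ − ε, and set μ_m := ρ^{m−1}·μ₁ for m ≥ 1. Then for every m ≥ 2: if z̃ ∈ B(x̄, r_max) satisfies ‖z̃ − T_{μ_{m−1}}(z̃)‖ ≤ ε, then the iterates z⁰ := z̃, z^{n+1} := T_{μ_m}(z^n) all lie in B(x̄,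 r_max), satisfy ‖z^n − z_{μ_m}‖ ≤ (κ')^n·(ε + ℓ·(μ_{m−1} − μ_m))/(1 − κ') for every n ≥ 0, and hence converge linearly to z_{μ_m}, which is the unique fixed point of T_{μ_m} in B(x̄, r_max). -/

import Mathlib

/-!
The starting point `z̃` is an `ε`-approximate fixed point of `T_{μ_{m-1}}`, hence, by
Lipschitz continuity in `μ`, an `(ε + ℓ (μ_{m-1} - μ_m))`-approximate fixed point of `T_{μ_m}`.
For a `κ'`-contraction this places `z̃` within `(ε + ℓ (μ_{m-1} - μ_m)) / (1 - κ')` of `z_{μ_m}`,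
a radius at most `ψ` by the choice of `ρ`. So the closed ball of that radius around `z_{μ_m}`
lies inside `B(x̄, r_max)`, where `T_{μ_m}` contracts, and the Picard iterates never leave it.
-/

open Filter Metric Topology

namespace LipschitzOnWith

variable {X : Type*} {K : NNReal} {f : X → X} {s : Set X} {p : X}

section PseudoMetricSpace

variable [PseudoMetricSpace X]

theorem dist_le_of_isFixedPt (hf : LipschitzOnWith K f s) (hK : K < 1) (hps : p ∈ s)
    (hp : Function.IsFixedPt f p) {x : X} (hx : x ∈ s) :
    dist x p ≤ dist x (f x) / (1 - K) := by
  have hK' : (0 : ℝ) < 1 - K := sub_pos.2 hK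
  have h : dist x p ≤ dist x (f x) + K * dist x p :=
    calc dist x p ≤ dist x (f x) + dist (f x) (f p) := by rw [hp.eq]; exact dist_triangle _ _ _
      _ ≤ dist x (f x) + K * dist x p := by gcongr; exact hf.dist_le_mul x hx p hps
  rw [le_div_iff₀ hK']
  linarith

theorem dist_le_of_isFixedPt_of_dist_le (hf : LipschitzOnWith K f s) (hK : K < 1) (hps : p ∈ s)
    (hp : Function.IsFixedPt f p) {x : X} (hx : x ∈ s) {g : X → X} {ε δ : ℝ}
    (hε : dist x (g x) ≤ ε) (hδ : dist (g x) (f x) ≤ δ) :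
    dist x p ≤ (ε + δ) / (1 - K) :=
  (hf.dist_le_of_isFixedPt hK hps hp hx).trans <| div_le_div_of_nonneg_right
    ((dist_triangle _ _ _).trans (add_le_add hε hδ)) (sub_nonneg.2 (NNReal.coe_le_one.2 hK.le))

variable {R : ℝ} {z : ℕ → X}

theorem orbit_mem_closedBall_and_dist_le (hf : LipschitzOnWith K f s) (hK : K ≤ 1)
    (hp : Function.IsFixedPt f p) (hR : closedBall p R ⊆ s) (h0 : z 0 ∈ closedBall p R)
    (hz : ∀ n, z (n + 1) = f (z n)) :
    ∀ n, z n ∈ closedBall p R ∧ dist (z n) p ≤ K ^ n * dist (z 0) p := by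
  intro n
  induction n with
  | zero => simpa using h0
  | succ n ih =>
    have hstep : dist (z (n + 1)) p ≤ K ^ (n + 1) * dist (z 0) p :=
      calc dist (z (n + 1)) p = dist (f (z n)) (f p) := by rw [hz, hp.eq]
        _ ≤ K * dist (z n) p := hf.dist_le_mul _ (hR ih.1) _ (hR (mem_closedBall_self
            (dist_nonneg.trans ih.1)))
        _ ≤ K * (K ^ n * dist (z 0) p) := by gcongr; exact ih.2
        _ = K ^ (n + 1) * dist (z 0) p := by rw [pow_succ]; ring
    refine ⟨?_, hstep⟩
    calc dist (z (n + 1)) p ≤ K ^ (n + 1) * dist (z 0) p := hstep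
      _ ≤ 1 * R := by gcongr; exacts [pow_le_one₀ K.2 hK, h0]
      _ = R := one_mul R

theorem tendsto_orbit (hf : LipschitzOnWith K f s) (hK : K < 1)
    (hp : Function.IsFixedPt f p) (hR : closedBall p R ⊆ s) (h0 : z 0 ∈ closedBall p R)
    (hz : ∀ n, z (n + 1) = f (z n)) : Tendsto z atTop (𝓝 p) := by
  have hgeom : Tendsto (fun n ↦ (K : ℝ) ^ n * dist (z 0) p) atTop (𝓝 0) := by
    simpa using (tendsto_pow_atTop_nhds_zero_of_lt_one K.2 hK).mul_const (dist (z 0) p)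
  exact tendsto_iff_dist_tendsto_zero.2 <| squeeze_zero (fun _ ↦ dist_nonneg)
    (fun n ↦ (hf.orbit_mem_closedBall_and_dist_le hK.le hp hR h0 hz n).2) hgeom

end PseudoMetricSpace

theorem eq_of_isFixedPt [MetricSpace X] {w : X} (hf : LipschitzOnWith K f s) (hK : K < 1)
    (hps : p ∈ s) (hp : Function.IsFixedPt f p) (hws : w ∈ s) (hw : Function.IsFixedPt f w) : w = p := by
  have h := hf.dist_le_of_isFixedPt hK hps hp hws
  rw [hw.eq, dist_self, zero_div] at h
  exact dist_le_zero.1 h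

end LipschitzOnWith

theorem pow_mul_mem_Ioc {ρ μ μmax : ℝ} (hρ0 : 0 < ρ) (hρ1 : ρ ≤ 1) (hμ : μ ∈ Set.Ioc 0 μmax)
    (k : ℕ) : ρ ^ k * μ ∈ Set.Ioc 0 μmax :=
  ⟨mul_pos (pow_pos hρ0 k) hμ.1, (mul_le_of_le_one_left hμ.1.le (pow_le_one₀ hρ0.le hρ1)).trans hμ.2⟩

theorem pow_mul_sub_pow_succ_mul_mem_Icc {ρ μ : ℝ} (hρ0 : 0 ≤ ρ) (hρ1 : ρ ≤ 1) (hμ : 0 ≤ μ)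
    (k : ℕ) : ρ ^ k * μ - ρ ^ (k + 1) * μ ∈ Set.Icc 0 ((1 - ρ) * μ) := by
  have h : ρ ^ k * μ - ρ ^ (k + 1) * μ = ρ ^ k * ((1 - ρ) * μ) := by ring
  have hδ : 0 ≤ (1 - ρ) * μ := mul_nonneg (sub_nonneg.2 hρ1) hμ
  rw [h]
  exact ⟨mul_nonneg (pow_nonneg hρ0 k) hδ, mul_le_of_le_one_left hδ (pow_le_one₀ hρ0 hρ1)⟩

theorem nexos_main_convergence
    {E : Type*} [NormedAddCommGroup E]
    (xbar : E) (rmax ψ κ' ℓ μmax : ℝ)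
    (hκ0 : 0 < κ') (hκ1 : κ' < 1) (hℓ : 0 < ℓ)
    (T : ℝ → E → E)
    -- (a) uniform contraction on the ball
    (ha : ∀ μ ∈ Set.Ioc (0 : ℝ) μmax, ∀ z₁ ∈ Metric.ball xbar rmax,
      ∀ z₂ ∈ Metric.ball xbar rmax, ‖T μ z₁ - T μ z₂‖ ≤ κ' * ‖z₁ - z₂‖)
    -- (b) Lipschitz continuity in `μ`
    (hb : ∀ μ₁ ∈ Set.Ioc (0 : ℝ) μmax, ∀ μ₂ ∈ Set.Ioc (0 : ℝ) μmax,
      ∀ x ∈ Metric.ball xbar rmax, ‖T μ₁ x - T μ₂ x‖ ≤ ℓ * |μ₁ - μ₂|)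
    -- (c) fixed points well inside the ball
    (zfix : ℝ → E)
    (hc : ∀ μ ∈ Set.Ioc (0 : ℝ) μmax, zfix μ ∈ Metric.ball xbar rmax ∧
      T μ (zfix μ) = zfix μ ∧ ψ < rmax - ‖zfix μ - xbar‖)
    (ε : ℝ)
    (μ₁ : ℝ) (hμ₁ : μ₁ ∈ Set.Ioc (0 : ℝ) μmax)
    (ρ : ℝ) (hρ0 : 0 < ρ) (hρ1 : ρ < 1)
    (hρ : ℓ * (1 - ρ) * μ₁ ≤ (1 - κ') * ψ - ε) :
    ∀ m : ℕ, 2 ≤ m →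
      ∀ ztilde ∈ Metric.ball xbar rmax,
        ‖ztilde - T (ρ ^ (m - 2) * μ₁) ztilde‖ ≤ ε →
        ∀ z : ℕ → E, z 0 = ztilde → (∀ n, z (n + 1) = T (ρ ^ (m - 1) * μ₁) (z n)) →
          (∀ n, z n ∈ Metric.ball xbar rmax) ∧
          (∀ n, ‖z n - zfix (ρ ^ (m - 1) * μ₁)‖ ≤
            κ' ^ n * (ε + ℓ * (ρ ^ (m - 2) * μ₁ - ρ ^ (m - 1) * μ₁)) / (1 - κ')) ∧
          Filter.Tendsto z Filter.atTop (nhds (zfix (ρ ^ (m - 1) * μ₁))) ∧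
          (∀ w ∈ Metric.ball xbar rmax,
            T (ρ ^ (m - 1) * μ₁) w = w → w = zfix (ρ ^ (m - 1) * μ₁)) := by
  intro m hm ztilde hzt hresid z hz0 hz
  obtain ⟨k, rfl⟩ := Nat.exists_eq_add_of_le' hm
  simp only [Nat.add_sub_cancel, show k + 2 - 1 = k + 1 by omega] at hresid hz ⊢
  set μp := ρ ^ k * μ₁
  set μc := ρ ^ (k + 1) * μ₁
  have hμp := pow_mul_mem_Ioc hρ0 hρ1.le hμ₁ k
  have hμc := pow_mul_mem_Ioc hρ0 hρ1.le hμ₁ (k + 1)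
  have hΔ := pow_mul_sub_pow_succ_mul_mem_Icc hρ0.le hρ1.le hμ₁.1.le k
  obtain ⟨hpball, hpfix, hpψ⟩ := hc μc hμc
  set K : NNReal := ⟨κ', hκ0.le⟩
  have hK : K < 1 := hκ1
  have hf : LipschitzOnWith K (T μc) (ball xbar rmax) := .of_dist_le_mul fun x hx y hy ↦ by
    rw [dist_eq_norm, dist_eq_norm]; exact ha μc hμc x hx y hy
  have hTμ : dist (T μp ztilde) (T μc ztilde) ≤ ℓ * (μp - μc) := by
    rw [dist_eq_norm, ← abs_of_nonneg hΔ.1]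
    exact hb μp hμp μc hμc ztilde hzt
  set C := (ε + ℓ * (μp - μc)) / (1 - κ')
  have hstart : dist (z 0) (zfix μc) ≤ C := hz0 ▸
    hf.dist_le_of_isFixedPt_of_dist_le hK hpball hpfix hzt (dist_eq_norm ztilde _ ▸ hresid) hTμ
  have hCψ : C ≤ ψ := by
    rw [div_le_iff₀ (sub_pos.2 hκ1)]
    linarith [mul_le_mul_of_nonneg_left hΔ.2 hℓ.le]
  have hR : closedBall (zfix μc) C ⊆ ball xbar rmax :=
    closedBall_subset_ball' (by rw [dist_eq_norm]; linarith)
  have horbit := hf.orbit_mem_closedBall_and_dist_le hK.le hpfix hR hstart hz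
  refine ⟨fun n ↦ hR (horbit n).1, fun n ↦ ?_, hf.tendsto_orbit hK hpfix hR hstart hz,
    fun w hw hwfix ↦ hf.eq_of_isFixedPt hK hpball hpfix hw hwfix⟩
  rw [← dist_eq_norm, mul_div_assoc]
  exact (horbit n).2.trans (mul_le_mul_of_nonneg_left hstart (pow_nonneg hκ0.le n))
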